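/- arXiv:2507.06745 — 7 statements merged into one kernel-verified Lean document; each statement's English description precedes it below -/
import Mathlib

section
/- In any {K_3,K_4}-decomposition of K_18 with exactly 7 triangles, exactly one vertex is contained in 4 triangles and every other vertex is contained in exactly 1 triangle. -/
/-- A `{K₃,K₄}`-decomposition of `K_v`: a family of blocks of size 3 or 4 such that
every edge (2-element subset of vertices) is contained in exactly one block. -/
def IsK34Decomposition {v : ℕ} (D : Finset (Finset (Fin v))) : Prop :=
  (∀ B ∈ D, B.card = 3 ∨ B.card = 4) ∧
  ∀ e : Finset (Fin v), e.card = 2 → ∃! B, B ∈ D ∧ e ⊆ B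

lemma local_count (D : Finset (Finset (Fin 18))) (hD : IsK34Decomposition D) (x : Fin 18) :
    2 * (D.filter fun B => B.card = 3 ∧ x ∈ B).card
      + 3 * (D.filter fun B => B.card = 4 ∧ x ∈ B).card = 17 := by
  classical
  -- unique block through each edge {x,y}
  have key : ∀ y : Fin 18, y ≠ x → ∃! B, B ∈ D ∧ x ∈ B ∧ y ∈ B := by
    intro y hy
    have h2 : ({x, y} : Finset (Fin 18)).card = 2 := by
      rw [Finset.card_pair (Ne.symm hy)]
    obtain ⟨B, ⟨hBD, hBs⟩, huniq⟩ := hD.2 {x, y} h2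
    refine ⟨B, ⟨hBD, ?_, ?_⟩, ?_⟩
    · exact hBs (by simp)
    · exact hBs (by simp)
    · intro C ⟨hCD, hxC, hyC⟩
      exact huniq C ⟨hCD, by simp [Finset.insert_subset_iff, hxC, hyC]⟩
  set f : Fin 18 → Finset (Fin 18) :=
    fun y => if h : ∃ B, B ∈ D ∧ x ∈ B ∧ y ∈ B then h.choose else ∅ with hf
  have hfspec : ∀ y : Fin 18, y ≠ x → f y ∈ D ∧ x ∈ f y ∧ y ∈ f y := by
    intro y hy
    obtain ⟨B, hB, hu⟩ := key y hy
    have hex : ∃ B, B ∈ D ∧ x ∈ B ∧ y ∈ B := ⟨B, hB⟩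
    simp only [hf, dif_pos hex]
    exact hex.choose_spec
  have hfuniq : ∀ y : Fin 18, y ≠ x → ∀ C, C ∈ D → x ∈ C → y ∈ C → f y = C := by
    intro y hy C hCD hxC hyC
    obtain ⟨B, hB, hu⟩ := key y hy
    have h1 := hu _ (hfspec y hy)
    have h2 := hu C ⟨hCD, hxC, hyC⟩
    rw [h1, h2]
  have hmap : ∀ y ∈ Finset.univ.erase x, f y ∈ D.filter (fun B => x ∈ B) := by
    intro y hy
    have := hfspec y (Finset.ne_of_mem_erase hy)
    simp [Finset.mem_filter, this.1, this.2.1]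
  have hcard := Finset.card_eq_sum_card_fiberwise hmap
  have hfiber : ∀ B ∈ D.filter (fun B => x ∈ B),
      ((Finset.univ.erase x).filter (fun y => f y = B)) = B.erase x := by
    intro B hB
    rw [Finset.mem_filter] at hB
    ext y
    simp only [Finset.mem_filter, Finset.mem_erase, Finset.mem_univ, true_and, and_true]
    constructor
    · rintro ⟨hy, hfy⟩
      exact ⟨hy, hfy ▸ (hfspec y hy).2.2⟩
    · rintro ⟨hy, hyB⟩
      exact ⟨hy, hfuniq y hy B hB.1 hB.2 hyB⟩
  have h17 : (Finset.univ.erase x).card = 17 := by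
    rw [Finset.card_erase_of_mem (Finset.mem_univ x)]; simp
  have hfiber' : ∀ B ∈ D.filter (fun B => x ∈ B),
      ((Finset.univ.erase x).filter (fun y => f y = B)).card = (B.erase x).card := by
    intro B hB; rw [hfiber B hB]
  rw [h17, Finset.sum_congr rfl hfiber'] at hcard
  -- now: 17 = ∑ B in filter, (B.erase x).card = ∑ (B.card - 1)
  have hsplit : D.filter (fun B => x ∈ B)
      = (D.filter fun B => B.card = 3 ∧ x ∈ B) ∪ (D.filter fun B => B.card = 4 ∧ x ∈ B) := by
    ext B
    simp only [Finset.mem_filter, Finset.mem_union]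
    constructor
    · rintro ⟨hBD, hxB⟩
      rcases hD.1 B hBD with h | h
      · exact Or.inl ⟨hBD, h, hxB⟩
      · exact Or.inr ⟨hBD, h, hxB⟩
    · rintro (⟨h1, _, h3⟩ | ⟨h1, _, h3⟩) <;> exact ⟨h1, h3⟩
  have hdisj : Disjoint (D.filter fun B => B.card = 3 ∧ x ∈ B)
      (D.filter fun B => B.card = 4 ∧ x ∈ B) := by
    rw [Finset.disjoint_left]
    intro B h1 h2
    rw [Finset.mem_filter] at h1 h2
    omega
  rw [hsplit, Finset.sum_union hdisj] at hcard
  have e3 : ∀ B ∈ (D.filter fun B => B.card = 3 ∧ x ∈ B), (B.erase x).card = 2 := by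
    intro B hB
    rw [Finset.mem_filter] at hB
    rw [Finset.card_erase_of_mem hB.2.2, hB.2.1]
  have e4 : ∀ B ∈ (D.filter fun B => B.card = 4 ∧ x ∈ B), (B.erase x).card = 3 := by
    intro B hB
    rw [Finset.mem_filter] at hB
    rw [Finset.card_erase_of_mem hB.2.2, hB.2.1]
  rw [Finset.sum_congr rfl e3, Finset.sum_congr rfl e4, Finset.sum_const, Finset.sum_const,
    smul_eq_mul, smul_eq_mul] at hcard
  omega

lemma global_count (D : Finset (Finset (Fin 18))) (hD : IsK34Decomposition D)
    (hα : (D.filter fun B => B.card = 3).card = 7) :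
    ∑ x : Fin 18, (D.filter fun B => B.card = 3 ∧ x ∈ B).card = 21 := by
  classical
  have h1 : ∀ x : Fin 18, (D.filter fun B => B.card = 3 ∧ x ∈ B).card
      = ∑ B ∈ D, if B.card = 3 ∧ x ∈ B then 1 else 0 := by
    intro x; rw [Finset.card_filter]
  simp only [h1]
  rw [Finset.sum_comm]
  have h2 : ∀ B ∈ D, (∑ x : Fin 18, if B.card = 3 ∧ x ∈ B then 1 else 0)
      = if B.card = 3 then 3 else 0 := by
    intro B hB
    by_cases h : B.card = 3
    · simp only [h, true_and, if_true]
      rw [← Finset.card_filter]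
      simpa using h
    · simp [h]
  rw [Finset.sum_congr rfl h2, ← Finset.sum_filter, Finset.sum_const, hα]
  rfl

theorem k18_seven_triangles_distribution (D : Finset (Finset (Fin 18)))
    (hD : IsK34Decomposition D)
    (hα : (D.filter fun B => B.card = 3).card = 7) :
    ∃ u : Fin 18, (D.filter fun B => B.card = 3 ∧ u ∈ B).card = 4 ∧
      ∀ x : Fin 18, x ≠ u → (D.filter fun B => B.card = 3 ∧ x ∈ B).card = 1 := by
  classical
  set t : Fin 18 → ℕ := fun x => (D.filter fun B => B.card = 3 ∧ x ∈ B).card with htdef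
  have ht : ∀ x, t x = 1 ∨ t x = 4 ∨ t x = 7 := by
    intro x
    have h : 2 * t x + 3 * ((D.filter fun B => B.card = 4 ∧ x ∈ B).card) = 17 :=
      local_count D hD x
    omega
  have hsum : ∑ x : Fin 18, t x = 21 := global_count D hD hα
  have hne : ∃ u, t u ≠ 1 := by
    by_contra h
    push_neg at h
    simp only [h, Finset.sum_const, Finset.card_univ, Fintype.card_fin, smul_eq_mul] at hsum
    omega
  obtain ⟨u, hu⟩ := hne
  have hlb : ∀ (s : Finset (Fin 18)), s.card • 1 ≤ ∑ x ∈ s, t x := by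
    intro s
    exact Finset.card_nsmul_le_sum s t 1 (fun x _ => by have := ht x; omega)
  have herase : t u + ∑ x ∈ Finset.univ.erase u, t x = 21 := by
    rw [Finset.add_sum_erase _ t (Finset.mem_univ u)]
    exact hsum
  have hcard17 : (Finset.univ.erase u).card = 17 := by
    rw [Finset.card_erase_of_mem (Finset.mem_univ u)]; simp
  have h1 := hlb (Finset.univ.erase u)
  rw [hcard17, smul_eq_mul] at h1
  have htu : t u = 4 := by have := ht u; omega
  refine ⟨u, htu, ?_⟩
  intro x hx
  have hxmem : x ∈ Finset.univ.erase u := Finset.mem_erase.2 ⟨hx, Finset.mem_univ x⟩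
  have herase2 : t x + ∑ y ∈ (Finset.univ.erase u).erase x, t y
      = ∑ y ∈ Finset.univ.erase u, t y := Finset.add_sum_erase _ t hxmem
  have h2 := hlb ((Finset.univ.erase u).erase x)
  rw [Finset.card_erase_of_mem hxmem, hcard17, smul_eq_mul] at h2
  have := ht x
  show t x = 1
  omega
end

section
/- In any {K_3,K_4}-decomposition of K_18 with exactly 9 triangles, no vertex is contained in 7 triangles; hence every vertex lies in 1 or 4 triangles, and exactly three vertices lie in 4 triangles. -/
namespace K34aux

variable {D : Finset (Finset (Fin 18))}

lemma edge_unique (hD : IsK34Decomposition D) {a b : Fin 18} (hab : a ≠ b)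
    {B₁ B₂ : Finset (Fin 18)} (h1 : B₁ ∈ D) (ha1 : a ∈ B₁) (hb1 : b ∈ B₁)
    (h2 : B₂ ∈ D) (ha2 : a ∈ B₂) (hb2 : b ∈ B₂) : B₁ = B₂ := by
  obtain ⟨B, _, hBu⟩ := hD.2 {a, b} (Finset.card_pair hab)
  have e1 : B₁ = B := hBu B₁ ⟨h1, by simp [Finset.insert_subset_iff, ha1, hb1]⟩
  have e2 : B₂ = B := hBu B₂ ⟨h2, by simp [Finset.insert_subset_iff, ha2, hb2]⟩
  rw [e1, e2]

lemma edge_cover (hD : IsK34Decomposition D) {a b : Fin 18} (hab : a ≠ b) :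
    ∃ B ∈ D, a ∈ B ∧ b ∈ B := by
  obtain ⟨B, ⟨hB, hsub⟩, _⟩ := hD.2 {a, b} (Finset.card_pair hab)
  exact ⟨B, hB, hsub (by simp), hsub (by simp)⟩

lemma erase_disjoint (hD : IsK34Decomposition D) (x : Fin 18) {B₁ B₂ : Finset (Fin 18)}
    (h1 : B₁ ∈ D) (hx1 : x ∈ B₁) (h2 : B₂ ∈ D) (hx2 : x ∈ B₂) (hne : B₁ ≠ B₂) :
    Disjoint (B₁.erase x) (B₂.erase x) := by
  rw [Finset.disjoint_left]
  intro y hy1 hy2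
  have hyx : y ≠ x := Finset.ne_of_mem_erase hy1
  exact hne (edge_unique hD (Ne.symm hyx) h1 hx1 (Finset.mem_of_mem_erase hy1)
    h2 hx2 (Finset.mem_of_mem_erase hy2))

lemma local_count (hD : IsK34Decomposition D) (x : Fin 18) :
    ∑ B ∈ D.filter (fun B => x ∈ B), (B.card - 1) = 17 := by
  have hdisj : ∀ B₁ ∈ D.filter (fun B => x ∈ B), ∀ B₂ ∈ D.filter (fun B => x ∈ B),
      B₁ ≠ B₂ → Disjoint (B₁.erase x) (B₂.erase x) := by
    intro B₁ h1 B₂ h2 hne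
    rw [Finset.mem_filter] at h1 h2
    exact erase_disjoint hD x h1.1 h1.2 h2.1 h2.2 hne
  have hbi : (D.filter (fun B => x ∈ B)).biUnion (fun B => B.erase x)
      = Finset.univ.erase x := by
    ext y
    simp only [Finset.mem_biUnion, Finset.mem_filter, Finset.mem_erase, Finset.mem_univ,
      and_true]
    constructor
    · rintro ⟨B, ⟨hB, hxB⟩, hyx, hyB⟩
      exact hyx
    · intro hyx
      obtain ⟨B, hB, hxB, hyB⟩ := edge_cover hD (Ne.symm hyx)
      exact ⟨B, ⟨hB, hxB⟩, hyx, hyB⟩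
  have := Finset.card_biUnion hdisj
  rw [hbi] at this
  have h17 : (Finset.univ.erase x).card = 17 := by
    rw [Finset.card_erase_of_mem (Finset.mem_univ x)]
    simp
  rw [h17] at this
  have hcg : ∑ B ∈ D.filter (fun B => x ∈ B), (B.card - 1)
      = ∑ B ∈ D.filter (fun B => x ∈ B), (B.erase x).card := by
    apply Finset.sum_congr rfl
    intro B hB
    rw [Finset.mem_filter] at hB
    rw [Finset.card_erase_of_mem hB.2]
  rw [hcg]
  exact this.symm

lemma alpha_eq (hD : IsK34Decomposition D) (x : Fin 18) :
    ∃ β, 2 * (D.filter fun B => B.card = 3 ∧ x ∈ B).card + 3 * β = 17 := by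
  refine ⟨(D.filter fun B => B.card ≠ 3 ∧ x ∈ B).card, ?_⟩
  have key := local_count hD x
  rw [← Finset.sum_filter_add_sum_filter_not (D.filter (fun B => x ∈ B))
    (fun B => B.card = 3)] at key
  have h3 : (D.filter (fun B => x ∈ B)).filter (fun B => B.card = 3)
      = D.filter fun B => B.card = 3 ∧ x ∈ B := by
    rw [Finset.filter_filter]
    ext B; simp only [Finset.mem_filter]; tauto
  have h4 : (D.filter (fun B => x ∈ B)).filter (fun B => ¬B.card = 3)
      = D.filter fun B => B.card ≠ 3 ∧ x ∈ B := by
    rw [Finset.filter_filter]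
    ext B; simp only [Finset.mem_filter]; tauto
  rw [h3, h4] at key
  have s3 : ∑ B ∈ D.filter (fun B => B.card = 3 ∧ x ∈ B), (B.card - 1)
      = 2 * (D.filter fun B => B.card = 3 ∧ x ∈ B).card := by
    rw [Finset.sum_congr rfl (fun B hB => ?_), Finset.sum_const, smul_eq_mul, mul_comm]
    rw [Finset.mem_filter] at hB
    rw [hB.2.1]
  have s4 : ∑ B ∈ D.filter (fun B => B.card ≠ 3 ∧ x ∈ B), (B.card - 1)
      = 3 * (D.filter fun B => B.card ≠ 3 ∧ x ∈ B).card := by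
    rw [Finset.sum_congr rfl (fun B hB => ?_), Finset.sum_const, smul_eq_mul, mul_comm]
    rw [Finset.mem_filter] at hB
    rcases hD.1 B hB.1 with h | h
    · exact absurd h hB.2.1
    · rw [h]
  rw [s3, s4] at key
  exact key

lemma alpha_mem (hD : IsK34Decomposition D) (x : Fin 18) :
    (D.filter fun B => B.card = 3 ∧ x ∈ B).card = 1 ∨
    (D.filter fun B => B.card = 3 ∧ x ∈ B).card = 4 ∨
    (D.filter fun B => B.card = 3 ∧ x ∈ B).card = 7 := by
  obtain ⟨β, hβ⟩ := alpha_eq hD x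
  omega

lemma total (hα : (D.filter fun B => B.card = 3).card = 9) :
    ∑ x : Fin 18, (D.filter fun B => B.card = 3 ∧ x ∈ B).card = 27 := by
  have h1 : ∀ x : Fin 18, (D.filter fun B => B.card = 3 ∧ x ∈ B)
      = (D.filter fun B => B.card = 3).filter (fun B => x ∈ B) := by
    intro x; rw [Finset.filter_filter]
  simp only [h1, Finset.card_filter]
  rw [Finset.sum_comm]
  have h2 : ∀ B : Finset (Fin 18), ∑ x : Fin 18, (if x ∈ B then 1 else 0) = B.card := by
    intro B
    rw [← Finset.card_filter]
    congr 1
    ext y; simp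
  rw [Finset.sum_congr rfl (fun B _ => h2 B)]
  rw [Finset.sum_congr rfl (fun B hB => (Finset.mem_filter.mp hB).2), Finset.sum_const, hα]
  simp

lemma no_seven (hD : IsK34Decomposition D)
    (hα : (D.filter fun B => B.card = 3).card = 9) (x : Fin 18)
    (h7 : (D.filter fun B => B.card = 3 ∧ x ∈ B).card = 7) : False := by
  classical
  set T := D.filter fun B => B.card = 3 with hT
  set Tx := D.filter fun B => B.card = 3 ∧ x ∈ B with hTx
  -- triangles not containing x
  set S := T.filter (fun B => x ∉ B) with hS
  have hTxT : Tx = T.filter (fun B => x ∈ B) := by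
    rw [hT, Finset.filter_filter]
  have hScard : S.card = 2 := by
    have key := Finset.card_filter_add_card_filter_not
      (s := T) (p := fun B => x ∈ B)
    have hSS : T.filter (fun B => ¬ x ∈ B) = S := rfl
    rw [← hTxT, hSS, h7, hα] at key
    omega
  obtain ⟨T₁, T₂, hT12, hSeq⟩ := Finset.card_eq_two.mp hScard
  -- facts about T₁ T₂
  have hT1S : T₁ ∈ S := by rw [hSeq]; simp
  have hT2S : T₂ ∈ S := by rw [hSeq]; simp
  have hSfact : ∀ C ∈ S, C ∈ D ∧ C.card = 3 ∧ x ∉ C := by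
    intro C hC
    rw [hS, hT, Finset.mem_filter, Finset.mem_filter] at hC
    exact ⟨hC.1.1, hC.1.2, hC.2⟩
  obtain ⟨hT1D, hT1c, hxT1⟩ := hSfact T₁ hT1S
  obtain ⟨hT2D, hT2c, hxT2⟩ := hSfact T₂ hT2S
  -- the neighbourhood N
  set N := Tx.biUnion (fun B => B.erase x) with hN
  have hTxfact : ∀ B ∈ Tx, B ∈ D ∧ B.card = 3 ∧ x ∈ B := by
    intro B hB
    rw [hTx, Finset.mem_filter] at hB
    exact ⟨hB.1, hB.2.1, hB.2.2⟩
  have hNcard : N.card = 14 := by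
    rw [hN, Finset.card_biUnion]
    · have hcg : ∑ B ∈ Tx, (B.erase x).card = ∑ B ∈ Tx, 2 := by
        apply Finset.sum_congr rfl
        intro B hB
        obtain ⟨hBD, hBc, hxB⟩ := hTxfact B hB
        rw [Finset.card_erase_of_mem hxB, hBc]
      rw [hcg, Finset.sum_const, h7]
      simp
    · intro B₁ h1 B₂ h2 hne
      obtain ⟨h1D, _, h1x⟩ := hTxfact B₁ h1
      obtain ⟨h2D, _, h2x⟩ := hTxfact B₂ h2
      exact erase_disjoint hD x h1D h1x h2D h2x hne
  have hxN : x ∉ N := fun h => by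
    obtain ⟨B, hB, hmem⟩ := Finset.mem_biUnion.mp h
    exact (Finset.mem_erase.mp hmem).1 rfl
  -- T₁ ∪ T₂ has at least 5 elements
  have hintcard : (T₁ ∩ T₂).card ≤ 1 := by
    rw [Finset.card_le_one]
    intro a ha b hb
    by_contra hab
    rw [Finset.mem_inter] at ha hb
    exact hT12 (edge_unique hD hab hT1D ha.1 hb.1 hT2D ha.2 hb.2)
  have hucard : 5 ≤ (T₁ ∪ T₂).card := by
    have := Finset.card_union_add_card_inter T₁ T₂
    omega
  -- (T₁ ∪ T₂) \ N ⊆ univ \ insert x N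
  have hsub : (T₁ ∪ T₂) \ N ⊆ Finset.univ \ insert x N := by
    intro z hz
    rw [Finset.mem_sdiff] at hz ⊢
    refine ⟨Finset.mem_univ z, ?_⟩
    rw [Finset.mem_insert]
    rintro (rfl | hzN)
    · rcases Finset.mem_union.mp hz.1 with h | h
      · exact hxT1 h
      · exact hxT2 h
    · exact hz.2 hzN
  have hsdcard : ((T₁ ∪ T₂) \ N).card ≤ 3 := by
    have h1 : (Finset.univ \ insert x N).card = 18 - (insert x N).card := by
      rw [Finset.card_sdiff_of_subset (Finset.subset_univ _)]
      simp
    rw [Finset.card_insert_of_notMem hxN, hNcard] at h1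
    have := Finset.card_le_card hsub
    omega
  -- there is y ∈ (T₁ ∪ T₂) ∩ N
  have hinter : ((T₁ ∪ T₂) ∩ N).Nonempty := by
    rw [← Finset.card_pos]
    have := Finset.card_sdiff_add_card_inter (T₁ ∪ T₂) N
    omega
  obtain ⟨y, hy⟩ := hinter
  rw [Finset.mem_inter] at hy
  -- y is in some block of Tx
  obtain ⟨B₀, hB₀Tx, hyB₀e⟩ := Finset.mem_biUnion.mp hy.2
  obtain ⟨hB₀D, hB₀c, hxB₀⟩ := hTxfact B₀ hB₀Tx
  have hyx : y ≠ x := (Finset.mem_erase.mp hyB₀e).1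
  have hyB₀ : y ∈ B₀ := Finset.mem_of_mem_erase hyB₀e
  -- y is in T₁ or T₂; call it C
  obtain ⟨C, hCS, hyC⟩ : ∃ C ∈ S, y ∈ C := by
    rcases Finset.mem_union.mp hy.1 with h | h
    · exact ⟨T₁, hT1S, h⟩
    · exact ⟨T₂, hT2S, h⟩
  obtain ⟨hCD, hCc, hxC⟩ := hSfact C hCS
  -- every triangle containing y is B₀, T₁ or T₂
  have hαy_sub : (D.filter fun B => B.card = 3 ∧ y ∈ B) ⊆ {B₀, T₁, T₂} := by
    intro B hB
    rw [Finset.mem_filter] at hB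
    obtain ⟨hBD, hBc, hyB⟩ := hB
    by_cases hxB : x ∈ B
    · have : B = B₀ := edge_unique hD (Ne.symm hyx) hBD hxB hyB hB₀D hxB₀ hyB₀
      simp [this]
    · have : B ∈ S := by
        rw [hS, hT, Finset.mem_filter, Finset.mem_filter]
        exact ⟨⟨hBD, hBc⟩, hxB⟩
      rw [hSeq] at this
      rcases Finset.mem_insert.mp this with h | h
      · simp [h]
      · simp at h
        simp [h]
  have hαy_le : (D.filter fun B => B.card = 3 ∧ y ∈ B).card ≤ 3 := by
    calc (D.filter fun B => B.card = 3 ∧ y ∈ B).card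
        ≤ ({B₀, T₁, T₂} : Finset (Finset (Fin 18))).card := Finset.card_le_card hαy_sub
      _ ≤ 3 := by
        apply le_trans (Finset.card_insert_le _ _)
        have := Finset.card_insert_le T₁ ({T₂} : Finset (Finset (Fin 18)))
        simp at this ⊢
        omega
  -- but B₀ and C are two distinct triangles containing y
  have hB₀C : B₀ ≠ C := fun h => hxC (h ▸ hxB₀)
  have hαy_ge : 2 ≤ (D.filter fun B => B.card = 3 ∧ y ∈ B).card := by
    have hsub2 : ({B₀, C} : Finset (Finset (Fin 18)))
        ⊆ D.filter fun B => B.card = 3 ∧ y ∈ B := by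
      intro B hB
      rw [Finset.mem_insert, Finset.mem_singleton] at hB
      rw [Finset.mem_filter]
      rcases hB with rfl | rfl
      · exact ⟨hB₀D, hB₀c, hyB₀⟩
      · exact ⟨hCD, hCc, hyC⟩
    have := Finset.card_le_card hsub2
    rw [Finset.card_insert_of_notMem (by simp [hB₀C]), Finset.card_singleton] at this
    exact this
  rcases alpha_mem hD y with h | h | h <;> omega

end K34aux

theorem k18_nine_triangles_distribution (D : Finset (Finset (Fin 18)))
    (hD : IsK34Decomposition D)
    (hα : (D.filter fun B => B.card = 3).card = 9) :
    (∀ x : Fin 18, (D.filter fun B => B.card = 3 ∧ x ∈ B).card ≠ 7) ∧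
    (∀ x : Fin 18, (D.filter fun B => B.card = 3 ∧ x ∈ B).card = 1 ∨
      (D.filter fun B => B.card = 3 ∧ x ∈ B).card = 4) ∧
    (Finset.univ.filter fun x : Fin 18 =>
      (D.filter fun B => B.card = 3 ∧ x ∈ B).card = 4).card = 3 := by
  have h7 : ∀ x : Fin 18, (D.filter fun B => B.card = 3 ∧ x ∈ B).card ≠ 7 :=
    fun x h => K34aux.no_seven hD hα x h
  have h14 : ∀ x : Fin 18, (D.filter fun B => B.card = 3 ∧ x ∈ B).card = 1 ∨
      (D.filter fun B => B.card = 3 ∧ x ∈ B).card = 4 := by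
    intro x
    rcases K34aux.alpha_mem hD x with h | h | h
    · exact Or.inl h
    · exact Or.inr h
    · exact absurd h (h7 x)
  refine ⟨h7, h14, ?_⟩
  have htot := K34aux.total hα
  have hsplit := Finset.sum_filter_add_sum_filter_not (Finset.univ : Finset (Fin 18))
    (fun x => (D.filter fun B => B.card = 3 ∧ x ∈ B).card = 4)
    (fun x => (D.filter fun B => B.card = 3 ∧ x ∈ B).card)
  rw [htot] at hsplit
  have h4 : ∑ x ∈ Finset.univ.filter
      (fun x : Fin 18 => (D.filter fun B => B.card = 3 ∧ x ∈ B).card = 4),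
      (D.filter fun B => B.card = 3 ∧ x ∈ B).card
      = 4 * (Finset.univ.filter fun x : Fin 18 =>
        (D.filter fun B => B.card = 3 ∧ x ∈ B).card = 4).card := by
    rw [Finset.sum_congr rfl (fun x hx => (Finset.mem_filter.mp hx).2),
      Finset.sum_const, smul_eq_mul, mul_comm]
  have h1 : ∑ x ∈ Finset.univ.filter
      (fun x : Fin 18 => ¬(D.filter fun B => B.card = 3 ∧ x ∈ B).card = 4),
      (D.filter fun B => B.card = 3 ∧ x ∈ B).card
      = (Finset.univ.filter fun x : Fin 18 =>
        ¬(D.filter fun B => B.card = 3 ∧ x ∈ B).card = 4).card := by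
    rw [Finset.sum_congr rfl (fun x hx => ?_), Finset.sum_const, smul_eq_mul, mul_one]
    rcases h14 x with h | h
    · exact h
    · exact absurd h (Finset.mem_filter.mp hx).2
  rw [h4, h1] at hsplit
  have hcards := Finset.card_filter_add_card_filter_not
    (s := (Finset.univ : Finset (Fin 18)))
    (p := fun x => (D.filter fun B => B.card = 3 ∧ x ∈ B).card = 4)
  rw [Finset.card_univ] at hcards
  simp only [Fintype.card_fin] at hcards
  omega
end

section
/- In any {K_3,K_4}-decomposition of K_19 with exactly 7 triangles, every vertex lies in at most 3 triangles, hence exactly 7 vertices lie in exactly 3 triangles each and the union of the 7 triangles is a complete subgraph K_7. -/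
section Aux

variable (D : Finset (Finset (Fin 19)))

/-- number of triangles through `x` -/
def triCount (x : Fin 19) : ℕ := (D.filter fun B => B.card = 3 ∧ x ∈ B).card

lemma sum_triCount :
    ∑ x : Fin 19, triCount D x = 3 * (D.filter fun B => B.card = 3).card := by
  have h : ∀ x : Fin 19, triCount D x =
      ∑ B ∈ D.filter fun B => B.card = 3, if x ∈ B then 1 else 0 := by
    intro x
    rw [triCount, ← Finset.filter_filter, Finset.card_filter]
  simp only [h]
  rw [Finset.sum_comm]
  have h2 : ∀ B : Finset (Fin 19), (∑ x : Fin 19, if x ∈ B then 1 else 0) = B.card := by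
    intro B
    rw [← Finset.card_filter]
    congr 1
    simp [Finset.filter_mem_eq_inter]
  rw [Finset.sum_congr rfl (fun B _ => h2 B)]
  rw [Finset.sum_congr rfl (fun B hB => (Finset.mem_filter.mp hB).2)]
  rw [Finset.sum_const, smul_eq_mul, mul_comm]

variable {D}

lemma edge_card {x y : Fin 19} (h : x ≠ y) : ({x, y} : Finset (Fin 19)).card = 2 :=
  Finset.card_pair h

lemma blocks_at_disjoint (hD : IsK34Decomposition D) (x : Fin 19)
    {B B' : Finset (Fin 19)} (hB : B ∈ D) (hB' : B' ∈ D) (hxB : x ∈ B) (hxB' : x ∈ B')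
    (hne : B ≠ B') : Disjoint (B.erase x) (B'.erase x) := by
  rw [Finset.disjoint_left]
  intro y hy hy'
  have hyx : y ≠ x := Finset.ne_of_mem_erase hy
  have hyB : y ∈ B := Finset.mem_of_mem_erase hy
  have hyB' : y ∈ B' := Finset.mem_of_mem_erase hy'
  have he : ({x, y} : Finset (Fin 19)).card = 2 := edge_card (Ne.symm hyx)
  obtain ⟨C, _, hCuniq⟩ := hD.2 _ he
  have hs1 : ({x, y} : Finset (Fin 19)) ⊆ B := by
    intro z hz
    rcases Finset.mem_insert.mp hz with rfl | hz
    · exact hxB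
    · rw [Finset.mem_singleton.mp hz]; exact hyB
  have hs2 : ({x, y} : Finset (Fin 19)) ⊆ B' := by
    intro z hz
    rcases Finset.mem_insert.mp hz with rfl | hz
    · exact hxB'
    · rw [Finset.mem_singleton.mp hz]; exact hyB'
  exact hne ((hCuniq B ⟨hB, hs1⟩).trans (hCuniq B' ⟨hB', hs2⟩).symm)

lemma degree_eq (hD : IsK34Decomposition D) (x : Fin 19) :
    ∑ B ∈ D.filter (fun B => x ∈ B), (B.card - 1) = 18 := by
  have hcov : Finset.univ.erase x =
      (D.filter (fun B => x ∈ B)).biUnion (fun B => B.erase x) := by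
    apply Finset.ext
    intro y
    simp only [Finset.mem_erase, Finset.mem_univ, and_true, Finset.mem_biUnion,
      Finset.mem_filter]
    constructor
    · intro hyx
      obtain ⟨B, ⟨hBD, hsub⟩, _⟩ := hD.2 {x, y} (edge_card (Ne.symm hyx))
      exact ⟨B, ⟨hBD, hsub (Finset.mem_insert_self x _)⟩, hyx, hsub (by simp)⟩
    · rintro ⟨B, _, hy, _⟩
      exact hy
  have hdisj : ∀ B ∈ D.filter (fun B => x ∈ B), ∀ B' ∈ D.filter (fun B => x ∈ B),
      B ≠ B' → Disjoint (B.erase x) (B'.erase x) := by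
    intro B hB B' hB' hne
    rw [Finset.mem_filter] at hB hB'
    exact blocks_at_disjoint hD x hB.1 hB'.1 hB.2 hB'.2 hne
  have h18 : (Finset.univ.erase x).card = 18 := by
    rw [Finset.card_erase_of_mem (Finset.mem_univ x)]
    simp
  rw [hcov, Finset.card_biUnion hdisj] at h18
  rw [← h18]
  apply Finset.sum_congr rfl
  intro B hB
  rw [Finset.mem_filter] at hB
  rw [Finset.card_erase_of_mem hB.2]

lemma two_mul_tri (hD : IsK34Decomposition D) (x : Fin 19) :
    2 * triCount D x + 3 * ((D.filter fun B => ¬ B.card = 3 ∧ x ∈ B).card) = 18 := by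
  have h := degree_eq hD x
  rw [← Finset.sum_filter_add_sum_filter_not (D.filter (fun B => x ∈ B))
    (fun B => B.card = 3)] at h
  have e1 : (D.filter (fun B => x ∈ B)).filter (fun B => B.card = 3)
      = D.filter (fun B => B.card = 3 ∧ x ∈ B) := by
    rw [Finset.filter_filter]
    apply Finset.filter_congr
    intro B _
    simp [and_comm]
  have e2 : (D.filter (fun B => x ∈ B)).filter (fun B => ¬ B.card = 3)
      = D.filter (fun B => ¬ B.card = 3 ∧ x ∈ B) := by
    rw [Finset.filter_filter]
    apply Finset.filter_congr
    intro B _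
    simp [and_comm]
  rw [e1, e2] at h
  have s1 : ∑ B ∈ D.filter (fun B => B.card = 3 ∧ x ∈ B), (B.card - 1)
      = 2 * triCount D x := by
    rw [triCount, Finset.sum_congr rfl (fun B hB => by
      rw [(Finset.mem_filter.mp hB).2.1]), Finset.sum_const, smul_eq_mul, mul_comm]
  have s2 : ∑ B ∈ D.filter (fun B => ¬ B.card = 3 ∧ x ∈ B), (B.card - 1)
      = 3 * (D.filter fun B => ¬ B.card = 3 ∧ x ∈ B).card := by
    rw [Finset.sum_congr rfl (fun B hB => by
      have hm := Finset.mem_filter.mp hB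
      have h4 : B.card = 4 := (hD.1 B hm.1).resolve_left hm.2.1
      rw [h4]), Finset.sum_const, smul_eq_mul, mul_comm]
  rw [s1, s2] at h
  exact h

lemma tri_dvd (hD : IsK34Decomposition D) (x : Fin 19) : 3 ∣ triCount D x := by
  have h := two_mul_tri hD x
  omega

lemma tri_pos_of_mem (hB : B ∈ D) (h3 : B.card = 3) {x : Fin 19} (hx : x ∈ B) :
    1 ≤ triCount D x := by
  exact Finset.card_pos.mpr ⟨B, Finset.mem_filter.mpr ⟨hB, h3, hx⟩⟩

lemma tri_le_three (hD : IsK34Decomposition D)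
    (hα : (D.filter fun B => B.card = 3).card = 7) (x : Fin 19) :
    triCount D x ≤ 3 := by
  by_contra hgt
  push_neg at hgt
  have hdvd := tri_dvd hD x
  have h6 : 6 ≤ triCount D x := by omega
  -- the triangle-neighbourhood of x
  set Tx := D.filter fun B => B.card = 3 ∧ x ∈ B with hTx
  set N := Tx.biUnion (fun B => B.erase x) with hN
  have hdisj : ∀ B ∈ Tx, ∀ B' ∈ Tx, B ≠ B' → Disjoint (B.erase x) (B'.erase x) := by
    intro B hB B' hB' hne
    rw [hTx, Finset.mem_filter] at hB hB'
    exact blocks_at_disjoint hD x hB.1 hB'.1 hB.2.2 hB'.2.2 hne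
  have hNcard : N.card = 2 * triCount D x := by
    rw [hN, Finset.card_biUnion hdisj, triCount]
    rw [Finset.sum_congr rfl (fun B hB => by
      rw [Finset.card_erase_of_mem (Finset.mem_filter.mp hB).2.2,
        (Finset.mem_filter.mp hB).2.1])]
    rw [Finset.sum_const, smul_eq_mul, mul_comm]
  have hxN : x ∉ N := by
    rw [hN, Finset.mem_biUnion]
    rintro ⟨B, _, hx⟩
    exact Finset.notMem_erase x B hx
  have hNtri : ∀ y ∈ N, 3 ≤ triCount D y := by
    intro y hy
    rw [hN, Finset.mem_biUnion] at hy
    obtain ⟨B, hB, hyB⟩ := hy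
    have hm := Finset.mem_filter.mp hB
    have h1 : 1 ≤ triCount D y := tri_pos_of_mem hm.1 hm.2.1 (Finset.mem_of_mem_erase hyB)
    have := tri_dvd hD y
    omega
  have hsum : ∑ y ∈ insert x N, triCount D y ≤ ∑ y : Fin 19, triCount D y :=
    Finset.sum_le_sum_of_subset (Finset.subset_univ _)
  rw [sum_triCount, hα] at hsum
  rw [Finset.sum_insert hxN] at hsum
  have hNsum : 3 * N.card ≤ ∑ y ∈ N, triCount D y := by
    calc 3 * N.card = ∑ _y ∈ N, 3 := by rw [Finset.sum_const, smul_eq_mul, mul_comm]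
    _ ≤ ∑ y ∈ N, triCount D y := Finset.sum_le_sum hNtri
  omega

lemma tri_eq_three_of_mem (hD : IsK34Decomposition D)
    (hα : (D.filter fun B => B.card = 3).card = 7)
    {B : Finset (Fin 19)} (hB : B ∈ D) (h3 : B.card = 3) {x : Fin 19} (hx : x ∈ B) :
    triCount D x = 3 := by
  have h1 := tri_pos_of_mem hB h3 hx
  have h2 := tri_dvd hD x
  have h3' := tri_le_three hD hα x
  omega

lemma card_T_eq_seven (hD : IsK34Decomposition D)
    (hα : (D.filter fun B => B.card = 3).card = 7) :
    (Finset.univ.filter fun x : Fin 19 => triCount D x = 3).card = 7 := by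
  have hsum := sum_triCount D
  rw [hα] at hsum
  rw [← Finset.sum_filter_add_sum_filter_not Finset.univ
    (fun x => triCount D x = 3) (fun x => triCount D x)] at hsum
  have h1 : ∑ x ∈ Finset.univ.filter (fun x => triCount D x = 3), triCount D x
      = 3 * (Finset.univ.filter fun x : Fin 19 => triCount D x = 3).card := by
    rw [Finset.sum_congr rfl (fun x hx => (Finset.mem_filter.mp hx).2),
      Finset.sum_const, smul_eq_mul, mul_comm]
  have h2 : ∑ x ∈ Finset.univ.filter (fun x => ¬ triCount D x = 3), triCount D x = 0 := by
    apply Finset.sum_eq_zero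
    intro x hx
    have hne := (Finset.mem_filter.mp hx).2
    have := tri_dvd hD x
    have := tri_le_three hD hα x
    omega
  rw [h1, h2] at hsum
  omega

end Aux

theorem k19_seven_triangles_union_is_K7 (D : Finset (Finset (Fin 19)))
    (hD : IsK34Decomposition D)
    (hα : (D.filter fun B => B.card = 3).card = 7) :
    (∀ x : Fin 19, (D.filter fun B => B.card = 3 ∧ x ∈ B).card ≤ 3) ∧
    (Finset.univ.filter fun x : Fin 19 =>
      (D.filter fun B => B.card = 3 ∧ x ∈ B).card = 3).card = 7 ∧
    (∀ B ∈ D, B.card = 3 → ∀ x ∈ B,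
      (D.filter fun B' => B'.card = 3 ∧ x ∈ B').card = 3) ∧
    ∀ x y : Fin 19,
      (D.filter fun B => B.card = 3 ∧ x ∈ B).card = 3 →
      (D.filter fun B => B.card = 3 ∧ y ∈ B).card = 3 → x ≠ y →
      ∃ B ∈ D, B.card = 3 ∧ x ∈ B ∧ y ∈ B := by
  refine ⟨tri_le_three hD hα, card_T_eq_seven hD hα,
    fun B hB h3 x hx => tri_eq_three_of_mem hD hα hB h3 hx, ?_⟩
  intro x y hx hy hxy
  -- the set of 7 vertices of triangles
  set T := Finset.univ.filter fun z : Fin 19 => triCount D z = 3 with hT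
  have hTcard : T.card = 7 := card_T_eq_seven hD hα
  set T7 := D.filter fun B => B.card = 3 with hT7
  -- each triangle is inside T
  have hBT : ∀ B ∈ T7, B ⊆ T := by
    intro B hB z hz
    have hm := Finset.mem_filter.mp hB
    rw [hT, Finset.mem_filter]
    exact ⟨Finset.mem_univ z, tri_eq_three_of_mem hD hα hm.1 hm.2 hz⟩
  -- pair counting
  have hsub : T7.biUnion (fun B => B.powersetCard 2) ⊆ T.powersetCard 2 := by
    intro e he
    rw [Finset.mem_biUnion] at he
    obtain ⟨B, hB, heB⟩ := he
    rw [Finset.mem_powersetCard] at heB ⊢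
    exact ⟨heB.1.trans (hBT B hB), heB.2⟩
  have hdisj : ∀ B ∈ T7, ∀ B' ∈ T7, B ≠ B' →
      Disjoint (B.powersetCard 2) (B'.powersetCard 2) := by
    intro B hB B' hB' hne
    rw [Finset.disjoint_left]
    intro e he he'
    rw [Finset.mem_powersetCard] at he he'
    obtain ⟨C, _, hCuniq⟩ := hD.2 e he.2
    exact hne (((hCuniq B ⟨(Finset.mem_filter.mp hB).1, he.1⟩)).trans
      (hCuniq B' ⟨(Finset.mem_filter.mp hB').1, he'.1⟩).symm)
  have hcard1 : (T7.biUnion (fun B => B.powersetCard 2)).card = 21 := by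
    rw [Finset.card_biUnion hdisj]
    rw [Finset.sum_congr rfl (fun B hB => by
      rw [Finset.card_powersetCard, (Finset.mem_filter.mp hB).2])]
    rw [Finset.sum_const, smul_eq_mul, hα]
    decide
  have hcard2 : (T.powersetCard 2).card = 21 := by
    rw [Finset.card_powersetCard, hTcard]
    decide
  have heq : T7.biUnion (fun B => B.powersetCard 2) = T.powersetCard 2 :=
    Finset.eq_of_subset_of_card_le hsub (by rw [hcard1, hcard2])
  have hmem : ({x, y} : Finset (Fin 19)) ∈ T.powersetCard 2 := by
    rw [Finset.mem_powersetCard]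
    constructor
    · intro z hz
      rcases Finset.mem_insert.mp hz with rfl | hz
      · rw [hT, Finset.mem_filter]; exact ⟨Finset.mem_univ z, hx⟩
      · rw [Finset.mem_singleton.mp hz, hT, Finset.mem_filter]
        exact ⟨Finset.mem_univ y, hy⟩
    · exact Finset.card_pair hxy
  rw [← heq, Finset.mem_biUnion] at hmem
  obtain ⟨B, hB, heB⟩ := hmem
  rw [Finset.mem_powersetCard] at heB
  have hm := Finset.mem_filter.mp hB
  exact ⟨B, hm.1, hm.2, heB.1 (Finset.mem_insert_self x _), heB.1 (by simp)⟩
end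

section
/- There is no pairwise balanced design PBD(19, {4, 7*}, 1): one cannot partition the edge set of K_19 into copies of K_4 together with the edge set of a single distinguished K_7. -/
theorem no_PBD_19_4_7star :
    ¬ ∃ D : Finset (Finset (Fin 19)),
      (∀ B ∈ D, B.card = 4 ∨ B.card = 7) ∧
      (∃! B, B ∈ D ∧ B.card = 7) ∧
      ∀ e : Finset (Fin 19), e.card = 2 → ∃! B, B ∈ D ∧ e ⊆ B := by
  rintro ⟨D, hsz, ⟨W, ⟨hWD, hW7⟩, hWuniq⟩, hcov⟩
  obtain ⟨x, hx⟩ : ∃ x, x ∉ W := by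
    by_contra h
    push_neg at h
    have hU : W = Finset.univ := Finset.eq_univ_iff_forall.mpr h
    rw [hU] at hW7
    simp at hW7
  set S := D.filter (fun B => x ∈ B) with hS
  have hpair : ∀ y : Fin 19, y ≠ x → ({x, y} : Finset (Fin 19)).card = 2 := by
    intro y hy
    exact Finset.card_pair (Ne.symm hy)
  have hScard : ∀ B ∈ S, B.card = 4 := by
    intro B hB
    rw [hS, Finset.mem_filter] at hB
    rcases hsz B hB.1 with h4 | h7
    · exact h4
    · have hBW : B = W := hWuniq B ⟨hB.1, h7⟩
      exact absurd (hBW ▸ hB.2) hx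
  -- each block through x meets W in at most one point (other than x)
  have hmeet : ∀ B ∈ S, (W ∩ B.erase x).card ≤ 1 := by
    intro B hB
    rw [Finset.card_le_one]
    intro a ha b hb
    by_contra hab
    simp only [Finset.mem_inter, Finset.mem_erase] at ha hb
    obtain ⟨B', hB', hu⟩ := hcov {a, b} (Finset.card_pair hab)
    rw [hS, Finset.mem_filter] at hB
    have e1 : B = B' := hu B ⟨hB.1, by
      intro z hz
      rcases Finset.mem_insert.mp hz with rfl | hz
      · exact ha.2.2
      · rw [Finset.mem_singleton] at hz; subst hz; exact hb.2.2⟩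
    have e2 : W = B' := hu W ⟨hWD, by
      intro z hz
      rcases Finset.mem_insert.mp hz with rfl | hz
      · exact ha.1
      · rw [Finset.mem_singleton] at hz; subst hz; exact hb.1⟩
    exact hx ((e2.trans e1.symm) ▸ hB.2)
  -- W is covered by blocks through x
  have hWsub : W ⊆ S.biUnion (fun B => W ∩ B.erase x) := by
    intro w hw
    have hwx : w ≠ x := fun h => hx (h ▸ hw)
    obtain ⟨B, ⟨hBD, hBsub⟩, _⟩ := hcov {x, w} (hpair w hwx)
    have hxB : x ∈ B := hBsub (by simp)
    have hwB : w ∈ B := hBsub (by simp)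
    rw [Finset.mem_biUnion]
    refine ⟨B, Finset.mem_filter.mpr ⟨hBD, hxB⟩, ?_⟩
    simp [hw, hwx, hwB]
  have h7le : 7 ≤ S.card := by
    calc 7 = W.card := hW7.symm
      _ ≤ (S.biUnion (fun B => W ∩ B.erase x)).card := Finset.card_le_card hWsub
      _ ≤ ∑ B ∈ S, (W ∩ B.erase x).card := Finset.card_biUnion_le
      _ ≤ ∑ _B ∈ S, 1 := Finset.sum_le_sum hmeet
      _ = S.card := by simp
  -- blocks through x have pairwise disjoint residues
  have hdisj : ∀ B₁ ∈ S, ∀ B₂ ∈ S, B₁ ≠ B₂ →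
      Disjoint (B₁.erase x) (B₂.erase x) := by
    intro B₁ h1 B₂ h2 hne
    rw [Finset.disjoint_left]
    intro y hy1 hy2
    rw [Finset.mem_erase] at hy1 hy2
    rw [hS, Finset.mem_filter] at h1 h2
    obtain ⟨B', hB', hu⟩ := hcov {x, y} (hpair y hy1.1)
    have e1 : B₁ = B' := hu B₁ ⟨h1.1, by
      intro z hz
      rcases Finset.mem_insert.mp hz with rfl | hz
      · exact h1.2
      · rw [Finset.mem_singleton] at hz; subst hz; exact hy1.2⟩
    have e2 : B₂ = B' := hu B₂ ⟨h2.1, by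
      intro z hz
      rcases Finset.mem_insert.mp hz with rfl | hz
      · exact h2.2
      · rw [Finset.mem_singleton] at hz; subst hz; exact hy2.2⟩
    exact hne (e1.trans e2.symm)
  have hcount : 3 * S.card ≤ 18 := by
    have hTsub : S.biUnion (fun B => B.erase x) ⊆ Finset.univ.erase x := by
      intro y hy
      rw [Finset.mem_biUnion] at hy
      obtain ⟨B, _, hyB⟩ := hy
      rw [Finset.mem_erase] at hyB ⊢
      exact ⟨hyB.1, Finset.mem_univ y⟩
    have hTcard : (S.biUnion (fun B => B.erase x)).card = 3 * S.card := by
      rw [Finset.card_biUnion hdisj]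
      rw [Finset.sum_congr rfl (fun B hB => ?_), Finset.sum_const, smul_eq_mul,
        mul_comm]
      rw [Finset.card_erase_of_mem, hScard B hB]
      exact (Finset.mem_filter.mp hB).2
    have h18 : (Finset.univ.erase x : Finset (Fin 19)).card = 18 := by
      rw [Finset.card_erase_of_mem (Finset.mem_univ x)]
      simp
    rw [← hTcard, ← h18]
    exact Finset.card_le_card hTsub
  omega
end

section
/- In any {K_3,K_4}-decomposition of K_19 with exactly 11 triangles, exactly 11 vertices are each contained in exactly 3 triangles, the remaining 8 vertices are in no triangle, and the union of the 11 triangles is a 6-regular graph on those 11 vertices. -/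
/-!
Every block through a vertex `x` covers its other points exactly once, so if `x` lies in `α_x`
triangles and `β_x` copies of `K₄`, then `2 α_x + 3 β_x = 18`; hence `3 ∣ α_x`. Double counting
gives `∑ α_x = 3 · 11 = 33`. The `2 α_x` triangle-neighbours of `x` lie in triangles themselves,
so each has `α ≥ 3`, which forces `7 α_x ≤ 33`. Thus `α_x ∈ {0, 3}`, eleven vertices have
`α_x = 3`, and each of them has `2 · 3 = 6` triangle-neighbours.
-/

open Finset

theorem Finset.sum_eq_mul_card_filter_of_forall_eq_zero_or {ι : Type*} {s : Finset ι}
    {f : ι → ℕ} {c : ℕ} (hf : ∀ i ∈ s, f i = 0 ∨ f i = c) :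
    ∑ i ∈ s, f i = c * (s.filter fun i => f i = c).card := by
  rw [← sum_filter_add_sum_filter_not s (fun i => f i = c),
    sum_const_nat fun i hi => (mem_filter.1 hi).2, mul_comm,
    sum_eq_zero fun i hi => (hf i (mem_filter.1 hi).1).resolve_right (mem_filter.1 hi).2,
    add_zero]

variable {v : ℕ}

def trianglesAt (D : Finset (Finset (Fin v))) (x : Fin v) : Finset (Finset (Fin v)) :=
  D.filter fun B => B.card = 3 ∧ x ∈ B

def triangleNeighbours (D : Finset (Finset (Fin v))) (x : Fin v) : Finset (Fin v) :=
  univ.filter fun y => y ≠ x ∧ ∃ B ∈ D, B.card = 3 ∧ x ∈ B ∧ y ∈ B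

theorem sum_card_trianglesAt (D : Finset (Finset (Fin v))) :
    ∑ x, (trianglesAt D x).card = 3 * (D.filter fun B => B.card = 3).card := by
  have hdouble := sum_card_bipartiteAbove_eq_sum_card_bipartiteBelow (fun x B => x ∈ B)
    (s := univ) (t := D.filter fun B => B.card = 3)
  have hAbove : ∀ x, bipartiteAbove (fun x B => x ∈ B) (D.filter fun B => B.card = 3) x =
      trianglesAt D x := fun x => by
    simp only [bipartiteAbove, trianglesAt, filter_filter]
  have hBelow : ∀ B ∈ D.filter fun B => B.card = 3,
      (bipartiteBelow (fun x B => x ∈ B) univ B).card = 3 := fun B hB => by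
    simpa [bipartiteBelow] using (mem_filter.1 hB).2
  rw [Finset.sum_congr rfl fun x _ => congrArg card (hAbove x), Finset.sum_congr rfl hBelow,
    sum_const, smul_eq_mul, mul_comm] at hdouble
  exact hdouble

namespace IsK34Decomposition

variable {D : Finset (Finset (Fin v))}

theorem eq_of_mem_of_mem (hD : IsK34Decomposition D) {B₁ B₂ : Finset (Fin v)}
    (h₁ : B₁ ∈ D) (h₂ : B₂ ∈ D) {x y : Fin v} (hxy : x ≠ y)
    (hx₁ : x ∈ B₁) (hy₁ : y ∈ B₁) (hx₂ : x ∈ B₂) (hy₂ : y ∈ B₂) : B₁ = B₂ :=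
  (hD.2 {x, y} (card_pair hxy)).unique
    ⟨h₁, insert_subset_iff.2 ⟨hx₁, singleton_subset_iff.2 hy₁⟩⟩
    ⟨h₂, insert_subset_iff.2 ⟨hx₂, singleton_subset_iff.2 hy₂⟩⟩

theorem pairwiseDisjoint_erase (hD : IsK34Decomposition D) (x : Fin v) :
    ((D.filter (x ∈ ·)) : Set (Finset (Fin v))).PairwiseDisjoint (·.erase x) := by
  intro B₁ h₁ B₂ h₂ hne
  simp only [coe_filter, Set.mem_ofPred_eq] at h₁ h₂
  refine disjoint_left.2 fun y hy₁ hy₂ => hne ?_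
  rw [mem_erase] at hy₁ hy₂
  exact hD.eq_of_mem_of_mem h₁.1 h₂.1 (Ne.symm hy₁.1) h₁.2 hy₁.2 h₂.2 hy₂.2

theorem biUnion_erase_eq (hD : IsK34Decomposition D) (x : Fin v) :
    (D.filter (x ∈ ·)).biUnion (·.erase x) = univ.erase x := by
  ext y
  simp only [mem_biUnion, mem_filter, mem_erase, mem_univ, and_true]
  refine ⟨fun ⟨_, _, hyx, _⟩ => hyx, fun hyx => ?_⟩
  obtain ⟨B, hB, hxyB⟩ := (hD.2 {x, y} (card_pair (Ne.symm hyx))).exists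
  exact ⟨B, ⟨hB, hxyB (by simp)⟩, hyx, hxyB (by simp)⟩

theorem sum_card_sub_one (hD : IsK34Decomposition D) (x : Fin v) :
    ∑ B ∈ D.filter (x ∈ ·), (B.card - 1) = v - 1 := by
  have h := congrArg card (hD.biUnion_erase_eq x)
  rw [card_biUnion (hD.pairwiseDisjoint_erase x), card_erase_of_mem (mem_univ x),
    card_univ, Fintype.card_fin] at h
  rw [← h]
  exact Finset.sum_congr rfl fun B hB => (card_erase_of_mem (mem_filter.1 hB).2).symm

theorem two_mul_card_trianglesAt_add (hD : IsK34Decomposition D) (x : Fin v) :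
    2 * (trianglesAt D x).card + 3 * (D.filter fun B => B.card = 4 ∧ x ∈ B).card = v - 1 := by
  have hK3 : (D.filter (x ∈ ·)).filter (fun B => B.card = 3) = trianglesAt D x := by
    rw [filter_filter]
    exact filter_congr fun B _ => and_comm
  have hK4 : (D.filter (x ∈ ·)).filter (fun B => ¬B.card = 3) =
      D.filter fun B => B.card = 4 ∧ x ∈ B := by
    rw [filter_filter]
    exact filter_congr fun B hB => by rcases hD.1 B hB with h | h <;> simp [h, and_comm]
  rw [← hD.sum_card_sub_one x, ← sum_filter_add_sum_filter_not _ (fun B => B.card = 3), hK3, hK4,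
    sum_const_nat (m := 2) fun B hB => by have := (mem_filter.1 hB).2.1; omega,
    sum_const_nat (m := 3) fun B hB => by have := (mem_filter.1 hB).2.1; omega,
    mul_comm, mul_comm 3]

theorem three_dvd_card_trianglesAt (hD : IsK34Decomposition D) (hv : 3 ∣ v - 1) (x : Fin v) :
    3 ∣ (trianglesAt D x).card := by
  have := hD.two_mul_card_trianglesAt_add x
  omega

theorem card_triangleNeighbours (hD : IsK34Decomposition D) (x : Fin v) :
    (triangleNeighbours D x).card = 2 * (trianglesAt D x).card := by
  have hbiUnion : triangleNeighbours D x = (trianglesAt D x).biUnion (·.erase x) := by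
    ext y
    simp only [triangleNeighbours, trianglesAt, mem_filter, mem_univ, true_and, mem_biUnion,
      mem_erase]
    exact ⟨fun ⟨hyx, B, hB, h3, hxB, hyB⟩ => ⟨B, ⟨hB, h3, hxB⟩, hyx, hyB⟩,
      fun ⟨B, ⟨hB, h3, hxB⟩, hyx, hyB⟩ => ⟨hyx, B, hB, h3, hxB, hyB⟩⟩
  have hsub : ((trianglesAt D x) : Set (Finset (Fin v))) ⊆ D.filter (x ∈ ·) := fun B hB => by
    simp only [trianglesAt, coe_filter, Set.mem_ofPred_eq] at hB ⊢
    exact ⟨hB.1, hB.2.2⟩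
  rw [hbiUnion, card_biUnion ((hD.pairwiseDisjoint_erase x).subset hsub),
    sum_const_nat fun B hB => ?_, mul_comm]
  simp only [trianglesAt, mem_filter] at hB
  rw [card_erase_of_mem hB.2.2, hB.2.1]

theorem seven_mul_card_trianglesAt_le (hD : IsK34Decomposition D) (hv : 3 ∣ v - 1)
    (x : Fin v) :
    7 * (trianglesAt D x).card ≤ 3 * (D.filter fun B => B.card = 3).card := by
  have hx : x ∉ triangleNeighbours D x := by simp [triangleNeighbours]
  have hneighbour : ∀ y ∈ triangleNeighbours D x, 3 ≤ (trianglesAt D y).card := by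
    intro y hy
    obtain ⟨-, B, hB, h3, -, hyB⟩ := (mem_filter.1 hy).2
    have hpos : 0 < (trianglesAt D y).card := card_pos.2 ⟨B, mem_filter.2 ⟨hB, h3, hyB⟩⟩
    have := hD.three_dvd_card_trianglesAt hv y
    omega
  calc 7 * (trianglesAt D x).card
      = (trianglesAt D x).card + (triangleNeighbours D x).card * 3 := by
        rw [hD.card_triangleNeighbours x]; ring
    _ ≤ (trianglesAt D x).card + ∑ y ∈ triangleNeighbours D x, (trianglesAt D y).card := by
        have := card_nsmul_le_sum _ _ _ hneighbour
        rw [smul_eq_mul] at this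
        omega
    _ = ∑ y ∈ insert x (triangleNeighbours D x), (trianglesAt D y).card :=
        (sum_insert (f := fun y => (trianglesAt D y).card) hx).symm
    _ ≤ ∑ y, (trianglesAt D y).card := sum_le_sum_of_subset (subset_univ _)
    _ = 3 * (D.filter fun B => B.card = 3).card := sum_card_trianglesAt D

end IsK34Decomposition

theorem k19_eleven_triangles_union_six_regular (D : Finset (Finset (Fin 19)))
    (hD : IsK34Decomposition D)
    (hα : (D.filter fun B => B.card = 3).card = 11) :
    (Finset.univ.filter fun x : Fin 19 =>
      (D.filter fun B => B.card = 3 ∧ x ∈ B).card = 3).card = 11 ∧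
    (Finset.univ.filter fun x : Fin 19 =>
      (D.filter fun B => B.card = 3 ∧ x ∈ B).card = 0).card = 8 ∧
    ∀ x : Fin 19, (D.filter fun B => B.card = 3 ∧ x ∈ B).card = 3 →
      (Finset.univ.filter fun y : Fin 19 =>
        y ≠ x ∧ ∃ B ∈ D, B.card = 3 ∧ x ∈ B ∧ y ∈ B).card = 6 := by
  have hcases : ∀ x, (trianglesAt D x).card = 0 ∨ (trianglesAt D x).card = 3 := fun x => by
    have := hD.seven_mul_card_trianglesAt_le (by norm_num) x
    have := hD.three_dvd_card_trianglesAt (by norm_num) x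
    omega
  have hthree : (univ.filter fun x => (trianglesAt D x).card = 3).card = 11 := by
    have := sum_card_trianglesAt D
    rw [sum_eq_mul_card_filter_of_forall_eq_zero_or fun x _ => hcases x, hα] at this
    omega
  have hzero : (univ.filter fun x => (trianglesAt D x).card = 0).card = 8 := by
    have hsplit := card_filter_add_card_filter_not (s := univ) fun x => (trianglesAt D x).card = 3
    have hnot : (univ.filter fun x => ¬(trianglesAt D x).card = 3) =
        univ.filter fun x => (trianglesAt D x).card = 0 :=
      filter_congr fun x _ => ⟨(hcases x).resolve_right, fun h => by omega⟩
    rw [hnot, hthree, card_univ, Fintype.card_fin] at hsplit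
    omega
  exact ⟨hthree, hzero, fun x hx => (hD.card_triangleNeighbours x).trans (congrArg (2 * ·) hx)⟩
end

section
/- In any {K_3,K_4}-decomposition of K_18 with exactly 13 triangles, no vertex is contained in 7 triangles. -/
set_option maxHeartbeats 1000000


lemma edge_unique {D : Finset (Finset (Fin 18))} (hD : IsK34Decomposition D)
    {a b : Fin 18} (hab : a ≠ b) {B₁ B₂ : Finset (Fin 18)}
    (h₁ : B₁ ∈ D) (h₂ : B₂ ∈ D) (ha₁ : a ∈ B₁) (hb₁ : b ∈ B₁)
    (ha₂ : a ∈ B₂) (hb₂ : b ∈ B₂) : B₁ = B₂ := by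
  have he : ({a, b} : Finset (Fin 18)).card = 2 := Finset.card_pair hab
  obtain ⟨B, _, hB⟩ := hD.2 {a, b} he
  have e₁ : B₁ = B := hB B₁ ⟨h₁, by simp [Finset.insert_subset_iff, ha₁, hb₁]⟩
  have e₂ : B₂ = B := hB B₂ ⟨h₂, by simp [Finset.insert_subset_iff, ha₂, hb₂]⟩
  rw [e₁, e₂]

lemma degree_sum {D : Finset (Finset (Fin 18))} (hD : IsK34Decomposition D) (y : Fin 18) :
    ∑ B ∈ D.filter (fun B => y ∈ B), (B.card - 1) = 17 := by
  have hdisj : ∀ B₁ ∈ D.filter (fun B => y ∈ B), ∀ B₂ ∈ D.filter (fun B => y ∈ B),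
      B₁ ≠ B₂ → Disjoint (B₁.erase y) (B₂.erase y) := by
    intro B₁ h₁ B₂ h₂ hne
    simp only [Finset.mem_filter] at h₁ h₂
    rw [Finset.disjoint_left]
    intro z hz₁ hz₂
    exact hne (edge_unique hD (Ne.symm (Finset.ne_of_mem_erase hz₁)) h₁.1 h₂.1
      h₁.2 (Finset.mem_of_mem_erase hz₁) h₂.2 (Finset.mem_of_mem_erase hz₂))
  have hcover : (D.filter (fun B => y ∈ B)).biUnion (fun B => B.erase y)
      = Finset.univ.erase y := by
    ext z
    simp only [Finset.mem_biUnion, Finset.mem_filter, Finset.mem_erase, Finset.mem_univ, and_true]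
    constructor
    · rintro ⟨B, ⟨_, _⟩, hz, _⟩; exact hz
    · intro hzy
      have he : ({y, z} : Finset (Fin 18)).card = 2 := Finset.card_pair (Ne.symm hzy)
      obtain ⟨B, ⟨hBD, hsub⟩, _⟩ := hD.2 {y, z} he
      exact ⟨B, ⟨hBD, hsub (by simp)⟩, hzy, hsub (by simp)⟩
  have hbu := Finset.card_biUnion hdisj
  rw [hcover] at hbu
  have h17 : (Finset.univ.erase y).card = 17 := by
    rw [Finset.card_erase_of_mem (Finset.mem_univ y)]
    simp
  rw [h17] at hbu
  rw [hbu]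
  exact Finset.sum_congr rfl fun B hB => by
    rw [Finset.card_erase_of_mem (Finset.mem_filter.1 hB).2]

lemma alpha_mod {D : Finset (Finset (Fin 18))} (hD : IsK34Decomposition D) (y : Fin 18) :
    (D.filter fun B => B.card = 3 ∧ y ∈ B).card % 3 = 1 ∧
      1 ≤ (D.filter fun B => B.card = 3 ∧ y ∈ B).card := by
  have hdeg := degree_sum hD y
  set s := D.filter (fun B => y ∈ B) with hs
  have hsplit := Finset.sum_filter_add_sum_filter_not s (fun B => B.card = 3) (fun B => B.card - 1)
  rw [hdeg] at hsplit
  have h1 : ∑ B ∈ s.filter (fun B => B.card = 3), (B.card - 1)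
      = 2 * (s.filter (fun B => B.card = 3)).card := by
    rw [Finset.sum_congr rfl (fun B hB => by
      rw [(Finset.mem_filter.1 hB).2]), Finset.sum_const, smul_eq_mul, mul_comm]
  have h2 : ∑ B ∈ s.filter (fun B => ¬ B.card = 3), (B.card - 1)
      = 3 * (s.filter (fun B => ¬ B.card = 3)).card := by
    rw [Finset.sum_congr rfl (fun B hB => by
      have hB' := Finset.mem_filter.1 hB
      have hBD := (Finset.mem_filter.1 hB'.1).1
      have := hD.1 B hBD
      have h4 : B.card = 4 := by tauto
      rw [h4]), Finset.sum_const, smul_eq_mul, mul_comm]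
  have heq : s.filter (fun B => B.card = 3) = D.filter (fun B => B.card = 3 ∧ y ∈ B) := by
    rw [hs, Finset.filter_filter]
    exact Finset.filter_congr fun B _ => by tauto
  rw [h1, h2, heq] at hsplit
  omega

theorem k18_thirteen_triangles_no_vertex_in_seven (D : Finset (Finset (Fin 18)))
    (hD : IsK34Decomposition D)
    (hα : (D.filter fun B => B.card = 3).card = 13) :
    ∀ x : Fin 18, (D.filter fun B => B.card = 3 ∧ x ∈ B).card ≠ 7 := by
  intro x hx
  -- the triangles through x, and the triangles avoiding x
  set Tx := D.filter (fun B => B.card = 3 ∧ x ∈ B) with hTxdef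
  set F := D.filter (fun B => B.card = 3 ∧ x ∉ B) with hFdef
  clear_value Tx F
  have hFsubD : F ⊆ D := by rw [hFdef]; exact Finset.filter_subset _ _
  have hFcard : F.card = 6 := by
    have hsplit := Finset.card_filter_add_card_filter_not
      (s := D.filter (fun B => B.card = 3)) (p := fun B => x ∈ B)
    have e1 : (D.filter (fun B => B.card = 3)).filter (fun B => x ∈ B) = Tx := by
      rw [hTxdef, Finset.filter_filter]
    have e2 : (D.filter (fun B => B.card = 3)).filter (fun B => ¬ x ∈ B) = F := by
      rw [hFdef, Finset.filter_filter]
    rw [e1, e2, hα, hx] at hsplit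
    omega
  have hF3 : ∀ T ∈ F, T.card = 3 := by
    intro T hT; rw [hFdef] at hT; exact (Finset.mem_filter.1 hT).2.1
  -- triangle-neighbours of x
  have hTxdisj : ∀ B₁ ∈ Tx, ∀ B₂ ∈ Tx, B₁ ≠ B₂ → Disjoint (B₁.erase x) (B₂.erase x) := by
    intro B₁ h₁ B₂ h₂ hne
    rw [hTxdef] at h₁ h₂
    simp only [Finset.mem_filter] at h₁ h₂
    rw [Finset.disjoint_left]
    intro z hz₁ hz₂
    exact hne (edge_unique hD (Ne.symm (Finset.ne_of_mem_erase hz₁)) h₁.1 h₂.1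
      h₁.2.2 (Finset.mem_of_mem_erase hz₁) h₂.2.2 (Finset.mem_of_mem_erase hz₂))
  set N := Tx.biUnion (fun B => B.erase x) with hNdef
  clear_value N
  have hNcard : N.card = 14 := by
    rw [hNdef, Finset.card_biUnion hTxdisj]
    have h2 : ∀ B ∈ Tx, (B.erase x).card = 2 := by
      intro B hB
      rw [hTxdef] at hB
      simp only [Finset.mem_filter] at hB
      rw [Finset.card_erase_of_mem hB.2.2, hB.2.1]
    rw [Finset.sum_congr rfl h2, Finset.sum_const, hx]
    rfl
  have hxN : x ∉ N := by
    rw [hNdef]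
    simp
  -- the counts from the 6 triangles avoiding x
  set c := fun y : Fin 18 => (F.filter (fun T => y ∈ T)).card with hcdef
  clear_value c
  have hdouble : ∀ Hs : Finset (Fin 18), ∑ y ∈ Hs, c y = ∑ T ∈ F, (T ∩ Hs).card := by
    intro Hs
    simp only [hcdef, Finset.card_filter]
    rw [Finset.sum_comm]
    refine Finset.sum_congr rfl fun T hT => ?_
    rw [← Finset.card_filter, Finset.filter_mem_eq_inter, Finset.inter_comm]
  have hcsum : ∑ y, c y = 18 := by
    rw [hdouble Finset.univ]
    have h3 : ∀ T ∈ F, (T ∩ Finset.univ).card = 3 := by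
      intro T hT; rw [Finset.inter_univ]; exact hF3 T hT
    rw [Finset.sum_congr rfl h3, Finset.sum_const, hFcard]
    rfl
  -- relating α_y to c y
  have halphasplit : ∀ y : Fin 18, (D.filter fun B => B.card = 3 ∧ y ∈ B).card
      = (Tx.filter (fun B => y ∈ B)).card + c y := by
    intro y
    have hs := Finset.card_filter_add_card_filter_not
      (s := D.filter (fun B => B.card = 3 ∧ y ∈ B)) (p := fun B => x ∈ B)
    have e1 : (D.filter (fun B => B.card = 3 ∧ y ∈ B)).filter (fun B => x ∈ B)
        = Tx.filter (fun B => y ∈ B) := by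
      rw [hTxdef, Finset.filter_filter, Finset.filter_filter]
      exact Finset.filter_congr fun B _ => and_right_comm
    have e2 : (D.filter (fun B => B.card = 3 ∧ y ∈ B)).filter (fun B => ¬ x ∈ B)
        = F.filter (fun B => y ∈ B) := by
      rw [hFdef, Finset.filter_filter, Finset.filter_filter]
      exact Finset.filter_congr fun B _ => and_right_comm
    rw [e1, e2] at hs
    simp only [hcdef]
    omega
  have hTxone : ∀ y ∈ N, (Tx.filter (fun B => y ∈ B)).card = 1 := by
    intro y hy
    rw [hNdef, Finset.mem_biUnion] at hy
    obtain ⟨B₀, hB₀, hyB₀⟩ := hy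
    have hyx : y ≠ x := Finset.ne_of_mem_erase hyB₀
    rw [Finset.card_eq_one]
    refine ⟨B₀, ?_⟩
    ext B
    simp only [Finset.mem_filter, Finset.mem_singleton]
    constructor
    · rintro ⟨hBTx, hyB⟩
      rw [hTxdef] at hBTx hB₀
      simp only [Finset.mem_filter] at hBTx hB₀
      exact edge_unique hD hyx hBTx.1 hB₀.1 hyB hBTx.2.2
        (Finset.mem_of_mem_erase hyB₀) hB₀.2.2
    · rintro rfl
      exact ⟨hB₀, Finset.mem_of_mem_erase hyB₀⟩
  have hTxzero : ∀ y : Fin 18, y ≠ x → y ∉ N → (Tx.filter (fun B => y ∈ B)).card = 0 := by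
    intro y hyx hyN
    rw [Finset.card_eq_zero, Finset.filter_eq_empty_iff]
    intro B hB hyB
    apply hyN
    rw [hNdef]
    exact Finset.mem_biUnion.2 ⟨B, hB, Finset.mem_erase.2 ⟨hyx, hyB⟩⟩
  have halpha : ∀ y : Fin 18, (D.filter fun B => B.card = 3 ∧ y ∈ B).card % 3 = 1 ∧
      1 ≤ (D.filter fun B => B.card = 3 ∧ y ∈ B).card := fun y => alpha_mod hD y
  have hcx : c x = 0 := by
    simp only [hcdef]
    rw [Finset.card_eq_zero, Finset.filter_eq_empty_iff]
    intro B hB hxB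
    rw [hFdef] at hB
    exact (Finset.mem_filter.1 hB).2.2 hxB
  -- classification of c values
  have hkey : ∀ y : Fin 18, c y = 0 ∨ (c y = 1 ∧ y ≠ x ∧ y ∉ N) ∨ 3 ≤ c y := by
    intro y
    by_cases hyx : y = x
    · left; rw [hyx]; exact hcx
    by_cases hyN : y ∈ N
    · have h1 := halphasplit y
      rw [hTxone y hyN] at h1
      have h2 := halpha y
      have h3 : c y = 0 ∨ 3 ≤ c y := by omega
      rcases h3 with h | h
      · exact Or.inl h
      · exact Or.inr (Or.inr h)
    · have h1 := halphasplit y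
      rw [hTxzero y hyx hyN] at h1
      have h2 := halpha y
      have : c y = 1 ∨ 3 ≤ c y := by omega
      rcases this with h | h
      · exact Or.inr (Or.inl ⟨h, hyx, hyN⟩)
      · exact Or.inr (Or.inr h)
  -- heavy and light vertices
  set H := Finset.univ.filter (fun y => 3 ≤ c y) with hHdef
  set L := Finset.univ.filter (fun y => c y = 1) with hLdef
  clear_value H L
  have hLcard : L.card ≤ 3 := by
    have hsub : L ⊆ Finset.univ \ insert x N := by
      intro y hy
      rw [hLdef] at hy
      simp only [Finset.mem_filter, Finset.mem_univ, true_and] at hy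
      rcases hkey y with h | h | h
      · omega
      · simp only [Finset.mem_sdiff, Finset.mem_univ, Finset.mem_insert, true_and]
        push_neg
        exact ⟨h.2.1, h.2.2⟩
      · omega
    have := Finset.card_le_card hsub
    rw [Finset.card_sdiff_of_subset (Finset.subset_univ _),
      Finset.card_insert_of_notMem hxN, hNcard] at this
    simpa using this
  have hsplitHL : ∑ y ∈ H, c y + L.card = 18 := by
    have hs := Finset.sum_filter_add_sum_filter_not Finset.univ (fun y => 3 ≤ c y) c
    rw [hcsum] at hs
    have h2 : ∑ y ∈ Finset.univ.filter (fun y => ¬ 3 ≤ c y), c y = L.card := by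
      rw [Finset.sum_filter, hLdef, Finset.card_filter]
      refine Finset.sum_congr rfl fun y _ => ?_
      rcases hkey y with h | ⟨h, -, -⟩ | h <;> split_ifs <;> omega
    rw [h2] at hs
    rw [hHdef]
    exact hs
  have hH3 : 3 * H.card ≤ ∑ y ∈ H, c y := by
    have := Finset.card_nsmul_le_sum H c 3
      (fun y hy => by rw [hHdef] at hy; exact (Finset.mem_filter.1 hy).2)
    simpa [mul_comm] using this
  -- the pair-counting bound
  have hpairdisj : ∀ T₁ ∈ F, ∀ T₂ ∈ F, T₁ ≠ T₂ →
      Disjoint (Finset.powersetCard 2 (T₁ ∩ H)) (Finset.powersetCard 2 (T₂ ∩ H)) := by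
    intro T₁ h₁ T₂ h₂ hne
    rw [Finset.disjoint_left]
    intro e he₁ he₂
    rw [Finset.mem_powersetCard] at he₁ he₂
    obtain ⟨hsub₁, hecard⟩ := he₁
    obtain ⟨hsub₂, -⟩ := he₂
    obtain ⟨a, b, hab, rfl⟩ := Finset.card_eq_two.1 hecard
    have haT₁ : a ∈ T₁ := (Finset.mem_inter.1 (hsub₁ (by simp))).1
    have hbT₁ : b ∈ T₁ := (Finset.mem_inter.1 (hsub₁ (by simp))).1
    have haT₂ : a ∈ T₂ := (Finset.mem_inter.1 (hsub₂ (by simp))).1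
    have hbT₂ : b ∈ T₂ := (Finset.mem_inter.1 (hsub₂ (by simp))).1
    exact hne (edge_unique hD hab (hFsubD h₁) (hFsubD h₂) haT₁ hbT₁ haT₂ hbT₂)
  have hpairs : ∑ T ∈ F, ((T ∩ H).card.choose 2) ≤ H.card.choose 2 := by
    have h1 := Finset.card_biUnion hpairdisj
    have h2 : F.biUnion (fun T => Finset.powersetCard 2 (T ∩ H))
        ⊆ Finset.powersetCard 2 H := by
      intro e he
      rw [Finset.mem_biUnion] at he
      obtain ⟨T, hT, he⟩ := he
      rw [Finset.mem_powersetCard] at he ⊢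
      exact ⟨he.1.trans Finset.inter_subset_right, he.2⟩
    calc ∑ T ∈ F, ((T ∩ H).card.choose 2)
        = ∑ T ∈ F, (Finset.powersetCard 2 (T ∩ H)).card :=
          Finset.sum_congr rfl fun T _ => (Finset.card_powersetCard 2 _).symm
      _ = (F.biUnion (fun T => Finset.powersetCard 2 (T ∩ H))).card := h1.symm
      _ ≤ (Finset.powersetCard 2 H).card := Finset.card_le_card h2
      _ = H.card.choose 2 := Finset.card_powersetCard 2 H
  have hlow : ∀ T ∈ F, 2 * (T ∩ H).card ≤ (T ∩ H).card.choose 2 + 3 := by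
    intro T hT
    have hle : (T ∩ H).card ≤ 3 := by
      have h1 : (T ∩ H).card ≤ T.card := Finset.card_le_card Finset.inter_subset_left
      have h2 := hF3 T hT
      omega
    set n := (T ∩ H).card with hn
    interval_cases n <;> decide
  have hsum2 : 2 * (∑ y ∈ H, c y) ≤ H.card.choose 2 + 18 := by
    have h1 : ∑ T ∈ F, 2 * (T ∩ H).card ≤ ∑ T ∈ F, ((T ∩ H).card.choose 2 + 3) :=
      Finset.sum_le_sum hlow
    rw [Finset.sum_add_distrib, Finset.sum_const, hFcard, ← Finset.mul_sum,
      ← hdouble H] at h1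
    have := hpairs
    simp only [smul_eq_mul] at h1
    omega
  -- final contradiction
  rcases Nat.eq_zero_or_pos L.card with hl | hl
  · have hH6 : H.card ≤ 6 := by omega
    have hc1 : H.card.choose 2 ≤ Nat.choose 6 2 := Nat.choose_le_choose 2 hH6
    have hc2 : Nat.choose 6 2 = 15 := by decide
    omega
  · have hH5 : H.card ≤ 5 := by omega
    have hc1 : H.card.choose 2 ≤ Nat.choose 5 2 := Nat.choose_le_choose 2 hH5
    have hc2 : Nat.choose 5 2 = 10 := by decide
    omega
end

section
/- In any {K_3,K_4}-decomposition of K_18 with exactly 11 triangles, every vertex lies in exactly 1 or exactly 4 triangles, and exactly 5 vertices lie in 4 triangles while the remaining 13 vertices lie in exactly 1 triangle. -/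
open Finset

lemma k34_uniq {D : Finset (Finset (Fin 18))} (hD : IsK34Decomposition D)
    {B B' : Finset (Fin 18)} (hB : B ∈ D) (hB' : B' ∈ D)
    {y z : Fin 18} (hyz : y ≠ z) (hy : y ∈ B) (hz : z ∈ B)
    (hy' : y ∈ B') (hz' : z ∈ B') : B = B' := by
  obtain ⟨C, _, hCu⟩ := hD.2 {y, z} (card_pair hyz)
  have h1 := hCu B ⟨hB, by simp [insert_subset_iff, hy, hz]⟩
  have h2 := hCu B' ⟨hB', by simp [insert_subset_iff, hy', hz']⟩
  rw [h1, h2]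

lemma k34_deg {D : Finset (Finset (Fin 18))} (hD : IsK34Decomposition D) (x : Fin 18) :
    ∑ B ∈ D.filter (fun B => x ∈ B), (B.card - 1) = 17 := by
  have hdisj : ∀ B₁ ∈ D.filter (fun B => x ∈ B), ∀ B₂ ∈ D.filter (fun B => x ∈ B),
      B₁ ≠ B₂ → Disjoint (B₁.erase x) (B₂.erase x) := by
    intro B₁ h1 B₂ h2 hne
    simp only [mem_filter] at h1 h2
    rw [Finset.disjoint_left]
    intro y hy1 hy2
    exact hne (k34_uniq hD h1.1 h2.1 (mem_erase.1 hy1).1 (mem_of_mem_erase hy1) h1.2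
      (mem_of_mem_erase hy2) h2.2)
  have hcover : (D.filter (fun B => x ∈ B)).biUnion (fun B => B.erase x)
      = Finset.univ.erase x := by
    apply Finset.Subset.antisymm
    · intro y hy
      simp only [mem_biUnion, mem_filter] at hy
      obtain ⟨B, _, hyB⟩ := hy
      exact mem_erase.2 ⟨(mem_erase.1 hyB).1, mem_univ y⟩
    · intro y hy
      have hyx : y ≠ x := (mem_erase.1 hy).1
      obtain ⟨B, ⟨hBD, hBe⟩, _⟩ := hD.2 {x, y} (card_pair (Ne.symm hyx))
      simp only [insert_subset_iff, singleton_subset_iff] at hBe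
      exact mem_biUnion.2 ⟨B, mem_filter.2 ⟨hBD, hBe.1⟩, mem_erase.2 ⟨hyx, hBe.2⟩⟩
  have hcard := congrArg Finset.card hcover
  rw [Finset.card_biUnion hdisj] at hcard
  have : ∀ B ∈ D.filter (fun B => x ∈ B), (B.erase x).card = B.card - 1 := by
    intro B hB
    exact Finset.card_erase_of_mem (mem_filter.1 hB).2
  rw [Finset.sum_congr rfl this] at hcard
  rw [hcard, Finset.card_erase_of_mem (mem_univ x)]; simp

lemma k34_alpha_eq {D : Finset (Finset (Fin 18))} (x : Fin 18) :
    D.filter (fun B => B.card = 3 ∧ x ∈ B) = (D.filter (fun B => B.card = 3)).filter (fun B => x ∈ B) := by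
  rw [Finset.filter_filter]

lemma k34_alpha_cases {D : Finset (Finset (Fin 18))} (hD : IsK34Decomposition D) (x : Fin 18) :
    (D.filter (fun B => B.card = 3 ∧ x ∈ B)).card = 1 ∨
    (D.filter (fun B => B.card = 3 ∧ x ∈ B)).card = 4 ∨
    (D.filter (fun B => B.card = 3 ∧ x ∈ B)).card = 7 := by
  have hdeg := k34_deg hD x
  rw [← Finset.sum_filter_add_sum_filter_not (D.filter (fun B => x ∈ B))
    (fun B => B.card = 3)] at hdeg
  have e1 : ∑ B ∈ (D.filter (fun B => x ∈ B)).filter (fun B => B.card = 3), (B.card - 1)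
      = 2 * ((D.filter (fun B => x ∈ B)).filter (fun B => B.card = 3)).card := by
    rw [Finset.sum_congr rfl (fun B hB => by rw [(mem_filter.1 hB).2]), Finset.sum_const,
      smul_eq_mul, mul_comm]
  have e2 : ∑ B ∈ (D.filter (fun B => x ∈ B)).filter (fun B => ¬ B.card = 3), (B.card - 1)
      = 3 * ((D.filter (fun B => x ∈ B)).filter (fun B => ¬ B.card = 3)).card := by
    rw [Finset.sum_congr rfl (fun B hB => by
      have h4 : B.card = 4 := by
        rcases hD.1 B (mem_filter.1 (mem_filter.1 hB).1).1 with h | h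
        · exact absurd h (mem_filter.1 hB).2
        · exact h
      rw [h4]), Finset.sum_const, smul_eq_mul, mul_comm]
  rw [e1, e2] at hdeg
  have heq : D.filter (fun B => B.card = 3 ∧ x ∈ B)
      = (D.filter (fun B => x ∈ B)).filter (fun B => B.card = 3) := by
    ext B
    simp only [mem_filter]
    tauto
  rw [heq]
  omega

lemma k34_double_count (T : Finset (Finset (Fin 18))) (S : Finset (Fin 18)) :
    ∑ x ∈ S, (T.filter (fun B => x ∈ B)).card = ∑ B ∈ T, (S ∩ B).card := by
  have h1 : ∀ x, (T.filter (fun B => x ∈ B)).card = ∑ B ∈ T, if x ∈ B then 1 else 0 := by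
    intro x; rw [Finset.card_filter]
  have h2 : ∀ B, (S ∩ B).card = ∑ x ∈ S, if x ∈ B then 1 else 0 := by
    intro B
    rw [← Finset.filter_mem_eq_inter, Finset.card_filter]
  simp_rw [h1, h2]
  exact Finset.sum_comm

lemma k34_sum_alpha {D : Finset (Finset (Fin 18))} (hD : IsK34Decomposition D)
    (hα : (D.filter fun B => B.card = 3).card = 11) :
    ∑ x : Fin 18, (D.filter (fun B => B.card = 3 ∧ x ∈ B)).card = 33 := by
  have : ∀ x : Fin 18, (D.filter (fun B => B.card = 3 ∧ x ∈ B)).card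
      = ((D.filter (fun B => B.card = 3)).filter (fun B => x ∈ B)).card := by
    intro x; rw [k34_alpha_eq]
  simp_rw [this]
  rw [k34_double_count]
  have h3 : ∀ B ∈ D.filter (fun B => B.card = 3), (Finset.univ ∩ B).card = 3 := by
    intro B hB
    rw [Finset.univ_inter]
    exact (mem_filter.1 hB).2
  rw [Finset.sum_congr rfl h3, Finset.sum_const, hα]; rfl

lemma count_split (f : Fin 18 → ℕ) (hf : ∀ x, f x = 1 ∨ f x = 4 ∨ f x = 7)
    (hs : ∑ x : Fin 18, f x = 33) :
    (univ.filter (fun x => f x = 1)).card + (univ.filter (fun x => f x = 4)).card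
      + (univ.filter (fun x => f x = 7)).card = 18 ∧
    (univ.filter (fun x => f x = 1)).card + 4 * (univ.filter (fun x => f x = 4)).card
      + 7 * (univ.filter (fun x => f x = 7)).card = 33 := by
  have hd14 : Disjoint (univ.filter (fun x => f x = 1)) (univ.filter (fun x => f x = 4)) := by
    rw [Finset.disjoint_left]; intro a h1 h4
    simp only [mem_filter] at h1 h4; omega
  have hd17 : Disjoint (univ.filter (fun x => f x = 1) ∪ univ.filter (fun x => f x = 4))
      (univ.filter (fun x => f x = 7)) := by
    rw [Finset.disjoint_left]; intro a h1 h7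
    simp only [mem_union, mem_filter] at h1 h7; omega
  have hu : (univ.filter (fun x => f x = 1) ∪ univ.filter (fun x => f x = 4))
      ∪ univ.filter (fun x => f x = 7) = univ := by
    ext x
    simp only [mem_union, mem_filter, mem_univ, true_and, iff_true]
    rcases hf x with h | h | h
    · exact Or.inl (Or.inl h)
    · exact Or.inl (Or.inr h)
    · exact Or.inr h
  constructor
  · have := congrArg Finset.card hu
    rw [Finset.card_union_of_disjoint hd17, Finset.card_union_of_disjoint hd14] at this
    simpa using this
  · have := hs
    rw [← hu, Finset.sum_union hd17, Finset.sum_union hd14] at this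
    rw [Finset.sum_congr rfl (fun x hx => (mem_filter.1 hx).2),
      Finset.sum_congr rfl (fun x hx => (mem_filter.1 hx).2),
      Finset.sum_congr rfl (fun x hx => (mem_filter.1 hx).2),
      Finset.sum_const, Finset.sum_const, Finset.sum_const] at this
    simpa [mul_comm] using this

lemma k34_no_seven {D : Finset (Finset (Fin 18))} (hD : IsK34Decomposition D)
    (hα : (D.filter fun B => B.card = 3).card = 11) (x : Fin 18)
    (h7 : (D.filter (fun B => B.card = 3 ∧ x ∈ B)).card = 7) : False := by
  classical
  set T := D.filter (fun B => B.card = 3) with hT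
  have hTD : T ⊆ D := Finset.filter_subset _ _
  set f : Fin 18 → ℕ := fun y => (D.filter (fun B => B.card = 3 ∧ y ∈ B)).card with hf
  have hfe : ∀ y, f y = (T.filter (fun B => y ∈ B)).card := by
    intro y; exact congrArg Finset.card (k34_alpha_eq (D := D) y)
  obtain ⟨h18, h33⟩ := count_split f (fun y => k34_alpha_cases hD y) (k34_sum_alpha hD hα)
  have hx7 : x ∈ univ.filter (fun y => f y = 7) := mem_filter.2 ⟨mem_univ x, h7⟩
  have hc1 : 1 ≤ (univ.filter (fun y => f y = 7)).card := Finset.card_pos.2 ⟨x, hx7⟩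
  -- rule out two vertices of degree 7
  have hc2 : (univ.filter (fun y => f y = 7)).card ≤ 1 := by
    by_contra hc
    push_neg at hc
    obtain ⟨y, hy, z, hz, hyz⟩ := Finset.one_lt_card.1 hc
    have hy7 : (T.filter (fun B => y ∈ B)).card = 7 := by
      rw [← hfe]; exact (mem_filter.1 hy).2
    have hz7 : (T.filter (fun B => z ∈ B)).card = 7 := by
      rw [← hfe]; exact (mem_filter.1 hz).2
    have hsub : T.filter (fun B => y ∈ B) ∪ T.filter (fun B => z ∈ B) ⊆ T := by
      intro B hB
      rcases mem_union.1 hB with h | h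
      · exact (mem_filter.1 h).1
      · exact (mem_filter.1 h).1
    have hint : (T.filter (fun B => y ∈ B) ∩ T.filter (fun B => z ∈ B)).card ≤ 1 := by
      apply Finset.card_le_one.2
      intro B hB B' hB'
      simp only [mem_inter, mem_filter] at hB hB'
      exact k34_uniq hD (hTD hB.1.1) (hTD hB'.1.1) hyz hB.1.2 hB.2.2 hB'.1.2 hB'.2.2
    have hun := Finset.card_union_add_card_inter (T.filter (fun B => y ∈ B))
      (T.filter (fun B => z ∈ B))
    have hle : (T.filter (fun B => y ∈ B) ∪ T.filter (fun B => z ∈ B)).card ≤ 11 := by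
      rw [← hα]; exact Finset.card_le_card hsub
    omega
  have hc : (univ.filter (fun y => f y = 7)).card = 1 := le_antisymm hc2 hc1
  have hb : (univ.filter (fun y => f y = 4)).card = 3 := by omega
  -- the set S of degree-4 vertices
  set S := univ.filter (fun y => f y = 4) with hS
  set T' := T.filter (fun B => x ∉ B) with hT'
  have hxc : (T.filter (fun B => x ∈ B)).card = 7 := by rw [← hfe]; exact h7
  have hT'card : T'.card = 4 := by
    rw [hT', Finset.filter_not, Finset.card_sdiff_of_subset (Finset.filter_subset _ _), hα, hxc]
  -- each degree-4 vertex is in at least 3 triangles of T'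
  have hkey : ∀ y ∈ S, 3 ≤ (T'.filter (fun B => y ∈ B)).card := by
    intro y hyS
    have hy4 : (T.filter (fun B => y ∈ B)).card = 4 := by
      rw [← hfe]; exact (mem_filter.1 hyS).2
    have hyx : y ≠ x := by
      intro h
      have h4 : f x = 4 := h ▸ (mem_filter.1 hyS).2
      have h7' : f x = 7 := h7
      omega
    have hsplit : ((T.filter (fun B => y ∈ B)).filter (fun B => x ∉ B)).card
        = 4 - ((T.filter (fun B => y ∈ B)).filter (fun B => x ∈ B)).card := by
      rw [Finset.filter_not, Finset.card_sdiff_of_subset (Finset.filter_subset _ _), hy4]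
    have h1 : ((T.filter (fun B => y ∈ B)).filter (fun B => x ∈ B)).card ≤ 1 := by
      apply Finset.card_le_one.2
      intro B hB B' hB'
      simp only [mem_filter] at hB hB'
      exact k34_uniq hD (hTD hB.1.1) (hTD hB'.1.1) hyx hB.1.2 hB.2 hB'.1.2 hB'.2
    have heq : (T.filter (fun B => y ∈ B)).filter (fun B => x ∉ B)
        = T'.filter (fun B => y ∈ B) := by
      rw [hT']; exact Finset.filter_comm _ _ _
    rw [heq] at hsplit
    omega
  -- double counting
  have hdc := k34_double_count T' S
  have h9 : 9 ≤ ∑ B ∈ T', (S ∩ B).card := by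
    rw [← hdc]
    calc (9 : ℕ) = ∑ _y ∈ S, 3 := by rw [Finset.sum_const, hb]; rfl
    _ ≤ ∑ y ∈ S, (T'.filter (fun B => y ∈ B)).card := Finset.sum_le_sum hkey
  -- pair counting
  have hdisj : ∀ B₁ ∈ T', ∀ B₂ ∈ T', B₁ ≠ B₂ →
      Disjoint ((S ∩ B₁).powersetCard 2) ((S ∩ B₂).powersetCard 2) := by
    intro B₁ h1 B₂ h2 hne
    rw [Finset.disjoint_left]
    intro e he1 he2
    rw [Finset.mem_powersetCard] at he1 he2
    obtain ⟨a, b, hab, habe⟩ := Finset.card_eq_two.1 he1.2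
    have ha1 : a ∈ B₁ := (mem_inter.1 (he1.1 (by rw [habe]; simp))).2
    have hb1 : b ∈ B₁ := (mem_inter.1 (he1.1 (by rw [habe]; simp))).2
    have ha2 : a ∈ B₂ := (mem_inter.1 (he2.1 (by rw [habe]; simp))).2
    have hb2 : b ∈ B₂ := (mem_inter.1 (he2.1 (by rw [habe]; simp))).2
    exact hne (k34_uniq hD (hTD (Finset.mem_of_mem_filter _ h1))
      (hTD (Finset.mem_of_mem_filter _ h2)) hab ha1 hb1 ha2 hb2)
  have hsub : T'.biUnion (fun B => (S ∩ B).powersetCard 2) ⊆ S.powersetCard 2 := by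
    intro e he
    obtain ⟨B, _, heB⟩ := mem_biUnion.1 he
    rw [Finset.mem_powersetCard] at heB ⊢
    exact ⟨heB.1.trans (Finset.inter_subset_left), heB.2⟩
  have hcardP : (S.powersetCard 2).card = 3 := by
    rw [Finset.card_powersetCard, hb]; rfl
  have hpair : ∑ B ∈ T', ((S ∩ B).card).choose 2 ≤ 3 := by
    have h1 : ∑ B ∈ T', ((S ∩ B).powersetCard 2).card
        = (T'.biUnion (fun B => (S ∩ B).powersetCard 2)).card :=
      (Finset.card_biUnion hdisj).symm
    have h2 : (T'.biUnion (fun B => (S ∩ B).powersetCard 2)).card ≤ 3 := by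
      rw [← hcardP]; exact Finset.card_le_card hsub
    calc ∑ B ∈ T', ((S ∩ B).card).choose 2
        = ∑ B ∈ T', ((S ∩ B).powersetCard 2).card := by
          apply Finset.sum_congr rfl
          intro B _
          rw [Finset.card_powersetCard]
    _ ≤ 3 := by rw [h1]; exact h2
  -- convexity bound
  have hconv : ∀ B ∈ T', 2 * (S ∩ B).card ≤ ((S ∩ B).card).choose 2 + 3 := by
    intro B _
    have hle3 : (S ∩ B).card ≤ 3 := by
      rw [← hb]; exact Finset.card_le_card (Finset.inter_subset_left)
    interval_cases h : (S ∩ B).card <;> decide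
  have hsum := Finset.sum_le_sum hconv
  rw [Finset.sum_add_distrib, Finset.sum_const, hT'card, ← Finset.mul_sum] at hsum
  simp only [smul_eq_mul] at hsum
  omega


set_option maxHeartbeats 1000000 in
theorem k18_eleven_triangles_distribution (D : Finset (Finset (Fin 18)))
    (hD : IsK34Decomposition D)
    (hα : (D.filter fun B => B.card = 3).card = 11) :
    (∀ x : Fin 18, (D.filter fun B => B.card = 3 ∧ x ∈ B).card = 1 ∨
      (D.filter fun B => B.card = 3 ∧ x ∈ B).card = 4) ∧
    (Finset.univ.filter fun x : Fin 18 =>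
      (D.filter fun B => B.card = 3 ∧ x ∈ B).card = 4).card = 5 ∧
    (Finset.univ.filter fun x : Fin 18 =>
      (D.filter fun B => B.card = 3 ∧ x ∈ B).card = 1).card = 13 := by
  have hcases : ∀ x : Fin 18, (D.filter fun B => B.card = 3 ∧ x ∈ B).card = 1 ∨
      (D.filter fun B => B.card = 3 ∧ x ∈ B).card = 4 := by
    intro x
    rcases k34_alpha_cases hD x with h | h | h
    · exact Or.inl h
    · exact Or.inr h
    · exact absurd h (fun h7 => k34_no_seven hD hα x h7)
  obtain ⟨h18, h33⟩ := count_split _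
    (fun x => k34_alpha_cases hD x) (k34_sum_alpha hD hα)
  have hc7 : (univ.filter (fun x : Fin 18 =>
      (D.filter fun B => B.card = 3 ∧ x ∈ B).card = 7)).card = 0 := by
    rw [Finset.card_eq_zero, Finset.filter_eq_empty_iff]
    exact fun {x} _ h7 => k34_no_seven hD hα x h7
  exact ⟨hcases, by omega, by omega⟩
end
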